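/- Let d ≥ 1 and n ≥ 2 be integers. If GL_d(ℚ) contains an element of finite order exactly n (equivalently, if ℤ/nℤ acts faithfully and linearly on a ℚ-vector space of dimension d), then f(n) := (Σ_{p prime, p ∣ n} φ(p^{v_p(n)})) − ε(n) ≤ d. -/

import Mathlib

/-- `ε(n) = 1` if `v₂(n) = 1` and `n ≠ 2`, and `ε(n) = 0` otherwise. -/
def epsAux (n : ℕ) : ℕ := if n.factorization 2 = 1 ∧ n ≠ 2 then 1 else 0

/-- `f(n) = (Σ_{p prime, p ∣ n} φ(p^{v_p(n)})) − ε(n)`. -/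
def fAux (n : ℕ) : ℕ := (∑ p ∈ n.primeFactors, (p ^ n.factorization p).totient) - epsAux n

/-!
The minimal polynomial of an element of order `n` in `GL_d(ℚ)` divides `X ^ n - 1`, so it is a
product of distinct cyclotomic polynomials `Φ_m`, `m ∈ S`, with `m ∣ n`. Its degree `∑_{m ∈ S} φ(m)`
is at most `d`, and the element is killed by `X ^ lcm S - 1`, so `n ∣ lcm S`: every prime power
`p ^ v_p(n)` divides some `m ∈ S`. The prime powers dividing a given `m` are pairwise coprime and,
apart from `2 ^ 1`, have `φ ≥ 2`; since `x + y ≤ x * y` for `x, y ≥ 2`, their totients add up to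
at most `φ(m)`. The one exception `φ(2) = 1` is what `ε(n)` removes.
-/

open Polynomial Finset
open scoped Nat Function

theorem Finset.sum_le_prod_of_two_le {ι : Type*} (s : Finset ι) (f : ι → ℕ)
    (hf : ∀ i ∈ s, 2 ≤ f i) : ∑ i ∈ s, f i ≤ ∏ i ∈ s, f i := by
  classical
  induction s using Finset.induction_on with
  | empty => simp
  | insert a s ha ih =>
    rw [sum_insert ha, prod_insert ha]
    have hs : ∑ i ∈ s, f i ≤ ∏ i ∈ s, f i := ih fun i hi => hf i (mem_insert_of_mem hi)
    have ha2 : 2 ≤ f a := hf a (mem_insert_self a s)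
    rcases s.eq_empty_or_nonempty with rfl | ⟨b, hb⟩
    · simp
    · have hprod : 2 ≤ ∏ i ∈ s, f i :=
        (hf b (mem_insert_of_mem hb)).trans <|
          single_le_prod' (fun i hi => one_le_two.trans (hf i (mem_insert_of_mem hi))) hb
      nlinarith

theorem Nat.two_le_totient {q : ℕ} (hq : 2 < q) : 2 ≤ φ q := by
  have h0 : φ q ≠ 0 := (Nat.totient_pos.2 (by omega)).ne'
  have h1 : φ q ≠ 1 := fun h => by have := Nat.totient_eq_one_iff.1 h; omega
  omega

theorem Nat.totient_prod_of_pairwise_coprime {ι : Type*} (s : Finset ι) (f : ι → ℕ)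
    (hs : (s : Set ι).Pairwise (Nat.Coprime on f)) : φ (∏ i ∈ s, f i) = ∏ i ∈ s, φ (f i) := by
  classical
  induction s using Finset.induction_on with
  | empty => simp
  | insert a s ha ih =>
    rw [coe_insert, Set.pairwise_insert_of_symm] at hs
    rw [prod_insert ha, prod_insert ha, Nat.totient_mul, ih hs.1]
    exact Nat.Coprime.prod_right fun i hi => hs.2 i hi (ne_of_mem_of_not_mem hi ha).symm

theorem Nat.sum_totient_le_totient_of_pairwise_coprime {ι : Type*} (s : Finset ι) (f : ι → ℕ)
    {m : ℕ} (hm : m ≠ 0) (hs : (s : Set ι).Pairwise (Nat.Coprime on f))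
    (hdvd : ∀ i ∈ s, f i ∣ m) (htwo : ∀ i ∈ s, 2 ≤ φ (f i)) :
    ∑ i ∈ s, φ (f i) ≤ φ m :=
  calc ∑ i ∈ s, φ (f i) ≤ ∏ i ∈ s, φ (f i) := sum_le_prod_of_two_le s _ htwo
    _ = φ (∏ i ∈ s, f i) := (Nat.totient_prod_of_pairwise_coprime s f hs).symm
    _ ≤ φ m := Nat.le_of_dvd (Nat.totient_pos.2 (Nat.pos_of_ne_zero hm))
        (Nat.totient_dvd_of_dvd <| prod_dvd_of_isRelPrime
          (hs.mono' fun _ _ h => Nat.coprime_iff_isRelPrime.1 h) hdvd)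

theorem Finset.exists_pow_dvd_of_pow_dvd_lcm {S : Finset ℕ} (hS : 0 ∉ S) {p k : ℕ}
    (hp : p.Prime) (hk : k ≠ 0) (h : p ^ k ∣ S.lcm id) : ∃ m ∈ S, p ^ k ∣ m := by
  have hS' : ∀ m ∈ S, id m ≠ 0 := fun m hm h0 => hS (h0 ▸ hm)
  have hL : S.lcm id ≠ 0 := by simpa [lcm_eq_zero_iff] using hS
  rw [hp.pow_dvd_iff_le_factorization hL, factorization_lcm hS',
    Finset.le_sup_iff (Nat.pos_of_ne_zero hk)] at h
  obtain ⟨m, hm, hkm⟩ := h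
  exact ⟨m, hm, (hp.pow_dvd_iff_le_factorization (hS' m hm)).2 hkm⟩

theorem fAux_two : fAux 2 = 1 := by
  simp [fAux, epsAux, Nat.prime_two.primeFactors, Nat.prime_two.factorization_self]

theorem fAux_eq_sum_of_ne_two {n : ℕ} (hn : n ≠ 2) :
    fAux n = ∑ p ∈ n.primeFactors with p ^ n.factorization p ≠ 2, φ (p ^ n.factorization p) := by
  have hsplit := sum_filter_add_sum_filter_not n.primeFactors
    (fun p => p ^ n.factorization p ≠ 2) (fun p => φ (p ^ n.factorization p))
  have htwo : ∑ p ∈ n.primeFactors with ¬p ^ n.factorization p ≠ 2, φ (p ^ n.factorization p)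
      = epsAux n := by
    rw [sum_filter]
    simp only [not_not, Nat.prime_two.pow_eq_iff, ite_and, sum_ite_eq', epsAux, hn, ne_eq,
      not_false_eq_true, and_true]
    split_ifs with h2 hv hv
    · rw [hv, pow_one, Nat.totient_two]
    · rfl
    · simp [← Nat.support_factorization, hv] at h2
    · rfl
  rw [fAux, ← hsplit, htwo, Nat.add_sub_cancel]

theorem Nat.sum_totient_ordProj_le_totient {n m : ℕ} (hm : m ≠ 0) {T : Finset ℕ}
    (hT : T ⊆ n.primeFactors) (htwo : ∀ p ∈ T, p ^ n.factorization p ≠ 2)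
    (hdvd : ∀ p ∈ T, p ^ n.factorization p ∣ m) :
    ∑ p ∈ T, φ (p ^ n.factorization p) ≤ φ m := by
  refine sum_totient_le_totient_of_pairwise_coprime T _ hm ?_ hdvd fun p hp => ?_
  · exact fun p hp q hq hpq => Nat.coprime_pow_primes _ _
      (Nat.prime_of_mem_primeFactors (hT hp)) (Nat.prime_of_mem_primeFactors (hT hq)) hpq
  · have hp' := hT hp
    exact two_le_totient <| lt_of_le_of_ne
      (Nat.one_lt_pow (Finsupp.mem_support_iff.1 hp') (Nat.prime_of_mem_primeFactors hp').one_lt)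
      (htwo p hp).symm

theorem fAux_le_sum_totient_of_dvd_lcm {n : ℕ} {S : Finset ℕ} (hS : 0 ∉ S) (hn : n ∣ S.lcm id) :
    fAux n ≤ ∑ m ∈ S, φ m := by
  have hcover : ∀ p ∈ n.primeFactors, ∃ m ∈ S, p ^ n.factorization p ∣ m := fun p hp =>
    S.exists_pow_dvd_of_pow_dvd_lcm hS (Nat.prime_of_mem_primeFactors hp)
      (Finsupp.mem_support_iff.1 hp)
      ((Nat.ordProj_dvd n p).trans hn)
  have hS0 : ∀ m ∈ S, m ≠ 0 := fun m hm => ne_of_mem_of_not_mem hm hS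
  by_cases h2 : n = 2
  · subst h2
    obtain ⟨m, hm, -⟩ := hcover 2 (by simp [Nat.prime_two])
    calc fAux 2 = 1 := fAux_two
      _ ≤ φ m := Nat.totient_pos.2 (Nat.pos_of_ne_zero (hS0 m hm))
      _ ≤ ∑ m ∈ S, φ m := single_le_sum (fun _ _ => Nat.zero_le _) hm
  rw [fAux_eq_sum_of_ne_two h2]
  choose! c hcS hc using hcover
  set P := {p ∈ n.primeFactors | p ^ n.factorization p ≠ 2}
  calc ∑ p ∈ P, φ (p ^ n.factorization p)
      = ∑ m ∈ S, ∑ p ∈ P with c p = m, φ (p ^ n.factorization p) :=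
        (sum_fiberwise_of_maps_to (fun p hp => hcS p (mem_filter.1 hp).1) _).symm
    _ ≤ ∑ m ∈ S, φ m := sum_le_sum fun m hm =>
        Nat.sum_totient_ordProj_le_totient (hS0 m hm)
          (fun p hp => (mem_filter.1 (mem_filter.1 hp).1).1)
          (fun p hp => (mem_filter.1 (mem_filter.1 hp).1).2)
          fun p hp => (mem_filter.1 hp).2 ▸ hc p (mem_filter.1 (mem_filter.1 hp).1).1

namespace Polynomial

theorem prod_cyclotomic_dvd_X_pow_sub_one (R : Type*) [CommRing R] {S : Finset ℕ} {L : ℕ}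
    (hL : 0 < L) (hS : ∀ m ∈ S, m ∣ L) : ∏ m ∈ S, cyclotomic m R ∣ X ^ L - 1 := by
  rw [← prod_cyclotomic_eq_X_pow_sub_one hL]
  exact prod_dvd_prod_of_subset _ _ _ fun m hm => Nat.mem_divisors.2 ⟨hS m hm, hL.ne'⟩

theorem sum_totient_le_natDegree_of_cyclotomic_dvd {S : Finset ℕ} {p : ℚ[X]} (hp : p ≠ 0)
    (hS : ∀ m ∈ S, cyclotomic m ℚ ∣ p) : ∑ m ∈ S, φ m ≤ p.natDegree :=
  calc ∑ m ∈ S, φ m = (∏ m ∈ S, cyclotomic m ℚ).natDegree := by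
        rw [natDegree_prod _ _ fun m _ => cyclotomic_ne_zero m ℚ]
        exact sum_congr rfl fun m _ => (natDegree_cyclotomic m ℚ).symm
    _ ≤ p.natDegree :=
        natDegree_le_of_dvd (prod_dvd_of_coprime (fun _ _ _ _ => cyclotomic.isCoprime_rat) hS) hp

open Classical in
theorem dvd_prod_cyclotomic_of_dvd_X_pow_sub_one {p : ℚ[X]} {n : ℕ} (hn : 0 < n)
    (h : p ∣ X ^ n - 1) : p ∣ ∏ m ∈ n.divisors with cyclotomic m ℚ ∣ p, cyclotomic m ℚ := by
  rw [← prod_cyclotomic_eq_X_pow_sub_one hn,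
    ← prod_filter_mul_prod_filter_not n.divisors (cyclotomic · ℚ ∣ p)] at h
  refine (IsCoprime.prod_right fun m hm => ?_).dvd_of_dvd_mul_right h
  obtain ⟨hm, hmp⟩ := mem_filter.1 hm
  exact ((cyclotomic.irreducible_rat (Nat.pos_of_mem_divisors hm)).coprime_iff_not_dvd.2 hmp).symm

end Polynomial

open Classical in
theorem pow_lcm_eq_one_of_pow_eq_one {A : Type*} [Ring A] [Algebra ℚ A] {x : A} {n : ℕ}
    (hn : 0 < n) (hx : x ^ n = 1) :
    x ^ ({m ∈ n.divisors | cyclotomic m ℚ ∣ minpoly ℚ x}.lcm id) = 1 := by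
  set S := {m ∈ n.divisors | cyclotomic m ℚ ∣ minpoly ℚ x}
  have hL : 0 < S.lcm id := Nat.pos_of_ne_zero (by simp [S, Finset.lcm_eq_zero_iff])
  have hμ : minpoly ℚ x ∣ X ^ n - 1 := minpoly.dvd ℚ x (by simp [hx])
  have hμL : minpoly ℚ x ∣ X ^ S.lcm id - 1 :=
    (dvd_prod_cyclotomic_of_dvd_X_pow_sub_one hn hμ).trans
      (prod_cyclotomic_dvd_X_pow_sub_one ℚ hL fun _ => dvd_lcm)
  simpa [sub_eq_zero] using aeval_eq_zero_of_dvd_aeval_eq_zero hμL (minpoly.aeval ℚ x)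

theorem Matrix.natDegree_minpoly_le {K ι : Type*} [Field K] [Fintype ι] [DecidableEq ι]
    (M : Matrix ι ι K) : (minpoly K M).natDegree ≤ Fintype.card ι :=
  (natDegree_le_of_dvd (minpoly_dvd_charpoly M) M.charpoly_monic.ne_zero).trans_eq
    M.charpoly_natDegree_eq_dim

theorem f_le_dim_of_finite_order_general (d n : ℕ) (hn : 2 ≤ n)
    (h : ∃ A : GL (Fin d) ℚ, orderOf A = n) : fAux n ≤ d := by
  classical
  obtain ⟨A, rfl⟩ := h
  rw [← orderOf_units] at hn ⊢
  set M : Matrix (Fin d) (Fin d) ℚ := ↑A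
  set S := {m ∈ (orderOf M).divisors | cyclotomic m ℚ ∣ minpoly ℚ M}
  have hS : 0 ∉ S := by simp [S]
  have hdvd : orderOf M ∣ S.lcm id :=
    orderOf_dvd_of_pow_eq_one (pow_lcm_eq_one_of_pow_eq_one (by omega) (pow_orderOf_eq_one M))
  calc fAux (orderOf M) ≤ ∑ m ∈ S, φ m := fAux_le_sum_totient_of_dvd_lcm hS hdvd
    _ ≤ (minpoly ℚ M).natDegree :=
        sum_totient_le_natDegree_of_cyclotomic_dvd (minpoly.ne_zero (.of_finite ℚ M))
          fun _ hm => (mem_filter.1 hm).2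
    _ ≤ d := by simpa using M.natDegree_minpoly_le

/-- If `GL_d(ℚ)` contains an element of finite order exactly `n` (i.e. `ℤ/nℤ` acts
faithfully and linearly on a `ℚ`-vector space of dimension `d`), then `f(n) ≤ d`. -/
theorem f_le_dim_of_finite_order (d n : ℕ) (hd : 1 ≤ d) (hn : 2 ≤ n)
    (h : ∃ A : GL (Fin d) ℚ, orderOf A = n) : fAux n ≤ d :=
  f_le_dim_of_finite_order_general d n hn h
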